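/- Let N be a finite set of n units, ℋ a sub-σ-algebra, and let G∘ = (N, E∘) and G = (N, E_G) be directed graphs without self-loops with in-neighborhoods N∘(i) and N_G(i). Suppose Y_{j,0}, Y_{i,1} are {0,1}-valued random variables, and for each ij ∈ E∘ there are {0,1}-valued random variables Y*_{ij}(1), Y*_{ij}(0) satisfying Y_{i,1}·Y_{j,0} = Y*_{ij}(1)·Y_{j,0} and Y_{i,1}·(1−Y_{j,0}) = Y*_{ij}(0)·(1−Y_{j,0}) almost surely, with (Y*_{ij}(1), Y*_{ij}(0)) conditionally independent of Y_{j,0} given ℋ. Assume: (a) for every ij ∈ E_G \ E∘, Cov(Y_{i,1}, Y_{j,0} | ℋ) = 0 almost surely; (b) for every ij ∈ E∘ \ E_G, Cov(Y_{i,1}, Y_{j,0} | ℋ) ≥ 0 almost surely; (c) v² = (1/n)Σ_{j∈N} μ_{j,0}(1−μ_{j,0}) > 0 almost surely, where μ_{j,0} = E[Y_{j,0}|ℋ]. Then for every δ > 0, almost surely, D − C_G ≥ (δ/(n v²)) · Σ_{i∈N} |{ j ∈ N∘(i) \ N_G(i) : Cov(Y_{i,1}, Y_{j,0} | ℋ)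 > δ }|, where D = Σ_{j∈N} w_j Σ_{i: ij∈E∘} E[Y*_{ij}(1) − Y*_{ij}(0) | ℋ] with w_j = μ_{j,0}(1−μ_{j,0})/(n v²), and C_G = (1/(n v²)) Σ_{ij∈E_G} Cov(Y_{i,1}, Y_{j,0} | ℋ). -/

import Mathlib

/-! On a causal edge `(i, j)`, consistency and unconfoundedness give
`E[Y_{i,1} Y_{j,0} | ℋ] = E[Y*(1) | ℋ] μ_{j,0}` and
`E[Y_{i,1} | ℋ] = E[Y*(1) | ℋ] μ_{j,0} + E[Y*(0) | ℋ] (1 - μ_{j,0})`, hence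
`Cov(Y_{i,1}, Y_{j,0} | ℋ) = E[Y*(1) - Y*(0) | ℋ] μ_{j,0} (1 - μ_{j,0})`.
So `n v² D` is the sum of the conditional covariances over `E∘`, and `n v² (D - C_G)` is their
sum over `E∘ \ E_G` minus their sum over `E_G \ E∘`. The latter vanishes by (a), and by (b) the
former is at least `δ` times the number of its terms exceeding `δ`. -/

open MeasureTheory ProbabilityTheory
open scoped Classical

noncomputable def condCov {Ω : Type*} {m0 : MeasurableSpace Ω} (μ : Measure Ω)
    (m : MeasurableSpace Ω) (X Y : Ω → ℝ) : Ω → ℝ :=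
  fun ω => (μ[fun ω' => X ω' * Y ω' | m]) ω - (μ[X | m]) ω * (μ[Y | m]) ω

open Finset

section Counting

variable {α β : Type*} [Fintype α] [Fintype β] [DecidableEq α] [DecidableEq β]

theorem Finset.sum_sum_filter_mem_left {M : Type*} [AddCommMonoid M] (E : Finset (α × β))
    (f : α × β → M) :
    ∑ i, ∑ j ∈ univ.filter (fun j => (i, j) ∈ E), f (i, j) = ∑ e ∈ E, f e := by
  simp only [sum_filter, ← Fintype.sum_prod_type', sum_ite_mem, univ_inter]

theorem Finset.sum_sum_filter_mem_right {M : Type*} [AddCommMonoid M] (E : Finset (α × β))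
    (f : α × β → M) :
    ∑ j, ∑ i ∈ univ.filter (fun i => (i, j) ∈ E), f (i, j) = ∑ e ∈ E, f e := by
  simp only [sum_filter]
  rw [← Fintype.sum_prod_type_right (fun e => if e ∈ E then f e else 0), sum_ite_mem, univ_inter]

theorem Finset.sum_card_filter_mem_and (E : Finset (α × β)) (p : α × β → Prop)
    [DecidablePred p] :
    ∑ i, #(univ.filter (fun j => (i, j) ∈ E ∧ p (i, j))) = #(E.filter p) := by
  simp only [card_eq_sum_ones, ← sum_sum_filter_mem_left, mem_filter]

end Counting

theorem Finset.mul_card_filter_lt_le_sum {ι R : Type*} [Semiring R] [PartialOrder R]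
    [IsOrderedRing R] (s : Finset ι) (c : ι → R) (δ : R) (hc : ∀ e ∈ s, 0 ≤ c e) :
    #(s.filter (fun e => δ < c e)) * δ ≤ ∑ e ∈ s, c e := by
  rw [← nsmul_eq_mul]
  calc #(s.filter (fun e => δ < c e)) • δ ≤ ∑ e ∈ s.filter (fun e => δ < c e), c e :=
        card_nsmul_le_sum _ _ _ fun e he => (mem_filter.mp he).2.le
    _ ≤ ∑ e ∈ s, c e := sum_le_sum_of_subset_of_nonneg (filter_subset _ _) fun e he _ => hc e he

theorem Finset.sum_sub_sum_eq_sum_sdiff_of_eq_zero {ι M : Type*} [DecidableEq ι] [AddCommGroup M]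
    (s t : Finset ι) (c : ι → M) (hc : ∀ e ∈ t \ s, c e = 0) :
    ∑ e ∈ s, c e - ∑ e ∈ t, c e = ∑ e ∈ s \ t, c e := by
  rw [← sum_sdiff_sub_sum_sdiff, sum_eq_zero hc, sub_zero]

theorem div_mul_sum_card_le_sum_sub_sum {N : Type*} [Fintype N] [DecidableEq N]
    (E0 EG : Finset (N × N)) (c d : N × N → ℝ) (w : N → ℝ) {K : ℝ} (hK : 0 ≤ K) (δ : ℝ)
    (hcd : ∀ e ∈ E0, c e = d e * w e.2) (hzero : ∀ e ∈ EG \ E0, c e = 0)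
    (hnonneg : ∀ e ∈ E0 \ EG, 0 ≤ c e) :
    δ / K * ∑ i, (#(univ.filter (fun j => (i, j) ∈ E0 \ EG ∧ δ < c (i, j))) : ℝ)
      ≤ (∑ j, w j / K * ∑ i ∈ univ.filter (fun i => (i, j) ∈ E0), d (i, j))
        - 1 / K * ∑ e ∈ EG, c e := by
  have hD : ∑ j, w j / K * ∑ i ∈ univ.filter (fun i => (i, j) ∈ E0), d (i, j)
      = 1 / K * ∑ e ∈ E0, c e := by
    rw [sum_congr rfl hcd, ← sum_sum_filter_mem_right, mul_sum]
    refine sum_congr rfl fun j _ => ?_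
    rw [mul_sum, mul_sum]
    exact sum_congr rfl fun i _ => by ring
  calc δ / K * ∑ i, (#(univ.filter (fun j => (i, j) ∈ E0 \ EG ∧ δ < c (i, j))) : ℝ)
      = 1 / K * (#((E0 \ EG).filter (fun e => δ < c e)) * δ) := by
        rw [← Nat.cast_sum, sum_card_filter_mem_and (E0 \ EG) (fun e => δ < c e)]
        ring
    _ ≤ 1 / K * ∑ e ∈ E0 \ EG, c e := by
        gcongr
        exact mul_card_filter_lt_le_sum _ _ _ hnonneg
    _ = _ := by rw [hD, ← sum_sub_sum_eq_sum_sdiff_of_eq_zero _ _ _ hzero, mul_sub]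

theorem condExp_one_sub {Ω : Type*} {mΩ : MeasurableSpace Ω} {μ : Measure Ω} [IsFiniteMeasure μ]
    {H : MeasurableSpace Ω} (hH : H ≤ mΩ) {f : Ω → ℝ} (hf : Integrable f μ) :
    μ[fun ω => 1 - f ω | H] =ᵐ[μ] fun ω => 1 - (μ[f | H]) ω := by
  filter_upwards [condExp_sub (integrable_const 1) hf H] with ω h
  rw [condExp_const hH] at h
  exact h

section Binary

variable {Ω : Type*} {mΩ : MeasurableSpace Ω} {μ : Measure Ω} {f g : Ω → ℝ}

theorem indicator_preimage_one_of_binary (hf : ∀ ω, f ω = 0 ∨ f ω = 1) :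
    (f ⁻¹' {1}).indicator (fun _ => (1 : ℝ)) = f := by
  funext ω
  rcases hf ω with h | h <;> simp [h]

theorem one_sub_binary (hf : ∀ ω, f ω = 0 ∨ f ω = 1) : ∀ ω, 1 - f ω = 0 ∨ 1 - f ω = 1 := by
  intro ω
  rcases hf ω with h | h <;> simp [h]

theorem mul_binary (hf : ∀ ω, f ω = 0 ∨ f ω = 1) (hg : ∀ ω, g ω = 0 ∨ g ω = 1) :
    ∀ ω, f ω * g ω = 0 ∨ f ω * g ω = 1 := by
  intro ω
  rcases hf ω with h | h <;> rcases hg ω with h' | h' <;> simp [h, h']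

theorem integrable_of_binary [IsFiniteMeasure μ] (hm : Measurable f)
    (hf : ∀ ω, f ω = 0 ∨ f ω = 1) : Integrable f μ :=
  .of_bound hm.aestronglyMeasurable 1 <| .of_forall fun ω => by rcases hf ω with h | h <;> simp [h]

/-- For `{0,1}`-valued variables, `f * g` is the indicator of `{f = 1} ∩ {g = 1}`, so conditional
independence of these events is exactly the product rule for conditional expectations. -/
theorem condExp_mul_of_condIndepFun_of_binary [StandardBorelSpace Ω] [IsFiniteMeasure μ]
    {H : MeasurableSpace Ω} {hH : H ≤ mΩ} (hfm : Measurable[mΩ] f) (hgm : Measurable[mΩ] g)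
    (hf : ∀ ω, f ω = 0 ∨ f ω = 1) (hg : ∀ ω, g ω = 0 ∨ g ω = 1)
    (hind : CondIndepFun H hH f g μ) :
    μ[fun ω => f ω * g ω | H] =ᵐ[μ] fun ω => (μ[f | H]) ω * (μ[g | H]) ω := by
  have h := (condIndepFun_iff_condExp_inter_preimage_eq_mul (hm' := hH) hfm hgm).mp hind {1} {1}
    (measurableSet_singleton 1) (measurableSet_singleton 1)
  have hfg : (f ⁻¹' {1} ∩ g ⁻¹' {1}).indicator (fun _ => (1 : ℝ)) = fun ω => f ω * g ω := by
    funext ω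
    have h1 := Set.inter_indicator_mul (s := f ⁻¹' {1}) (t := g ⁻¹' {1})
      (fun _ => (1 : ℝ)) (fun _ => 1) ω
    rwa [mul_one, indicator_preimage_one_of_binary hf, indicator_preimage_one_of_binary hg] at h1
  rwa [hfg, indicator_preimage_one_of_binary hf, indicator_preimage_one_of_binary hg] at h

end Binary

theorem condCov_ae_eq_condExp_sub_mul_of_condIndepFun {Ω : Type*} {mΩ : MeasurableSpace Ω}
    [StandardBorelSpace Ω] {μ : Measure Ω} [IsFiniteMeasure μ] {H : MeasurableSpace Ω}
    {hH : H ≤ mΩ} {X T A B : Ω → ℝ}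
    (hTm : Measurable[mΩ] T) (hAm : Measurable[mΩ] A) (hBm : Measurable[mΩ] B)
    (hT : ∀ ω, T ω = 0 ∨ T ω = 1) (hA : ∀ ω, A ω = 0 ∨ A ω = 1) (hB : ∀ ω, B ω = 0 ∨ B ω = 1)
    (hcons1 : ∀ᵐ ω ∂μ, X ω * T ω = A ω * T ω)
    (hcons0 : ∀ᵐ ω ∂μ, X ω * (1 - T ω) = B ω * (1 - T ω))
    (hind : CondIndepFun H hH (fun ω => (A ω, B ω)) T μ) :
    condCov μ H X T =ᵐ[μ] fun ω =>
      (μ[fun ω' => A ω' - B ω' | H]) ω * ((μ[T | H]) ω * (1 - (μ[T | H]) ω)) := by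
  have hTi : Integrable T μ := integrable_of_binary hTm hT
  have hAi : Integrable A μ := integrable_of_binary hAm hA
  have hBi : Integrable B μ := integrable_of_binary hBm hB
  have h1Tm : Measurable[mΩ] fun ω => 1 - T ω := measurable_const.sub hTm
  have hATi : Integrable (fun ω => A ω * T ω) μ :=
    integrable_of_binary (hAm.mul hTm) (mul_binary hA hT)
  have hB1Ti : Integrable (fun ω => B ω * (1 - T ω)) μ :=
    integrable_of_binary (hBm.mul h1Tm) (mul_binary hB (one_sub_binary hT))
  have hAT : μ[fun ω => A ω * T ω | H] =ᵐ[μ] fun ω => (μ[A | H]) ω * (μ[T | H]) ω :=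
    condExp_mul_of_condIndepFun_of_binary hAm hTm hA hT (hind.comp measurable_fst measurable_id)
  have hBT : μ[fun ω => B ω * (1 - T ω) | H] =ᵐ[μ]
      fun ω => (μ[B | H]) ω * (1 - (μ[T | H]) ω) := by
    filter_upwards [condExp_mul_of_condIndepFun_of_binary hBm h1Tm hB (one_sub_binary hT)
      (hind.comp measurable_snd (measurable_const.sub measurable_id)),
      condExp_one_sub hH hTi] with ω h h'
    rw [h, h']
  have hXT : μ[fun ω => X ω * T ω | H] =ᵐ[μ] fun ω => (μ[A | H]) ω * (μ[T | H]) ω :=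
    (condExp_congr_ae hcons1).trans hAT
  have hX : μ[X | H] =ᵐ[μ] fun ω =>
      (μ[A | H]) ω * (μ[T | H]) ω + (μ[B | H]) ω * (1 - (μ[T | H]) ω) := by
    have hsplit : X =ᵐ[μ] (fun ω => A ω * T ω) + fun ω => B ω * (1 - T ω) := by
      filter_upwards [hcons1, hcons0] with ω h1 h0
      rw [Pi.add_apply]
      linear_combination h1 + h0
    filter_upwards [condExp_congr_ae hsplit, condExp_add hATi hB1Ti H, hAT, hBT]
      with ω h hadd hA' hB'
    rw [h, hadd, Pi.add_apply, hA', hB']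
  filter_upwards [hXT, hX, condExp_sub hAi hBi H] with ω h1 h2 h3
  simp only [condCov, h1, h2]
  rw [show (fun ω' => A ω' - B ω') = A - B from rfl, h3, Pi.sub_apply]
  ring

theorem stmt16_general {Ω : Type*} [mΩ : MeasurableSpace Ω] [StandardBorelSpace Ω]
    (μ : Measure Ω) [IsProbabilityMeasure μ]
    {N : Type*} [Fintype N] [DecidableEq N]
    (E0 EG : Finset (N × N))
    (Y0 Y1 : N → Ω → ℝ) (Ys1 Ys0 : N → N → Ω → ℝ)
    (hY0m : ∀ j, Measurable (Y0 j))
    (hYs1m : ∀ i j, (i, j) ∈ E0 → Measurable (Ys1 i j))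
    (hYs0m : ∀ i j, (i, j) ∈ E0 → Measurable (Ys0 i j))
    (hY0b : ∀ j ω, Y0 j ω = 0 ∨ Y0 j ω = 1)
    (hYs1b : ∀ i j, (i, j) ∈ E0 → ∀ ω, Ys1 i j ω = 0 ∨ Ys1 i j ω = 1)
    (hYs0b : ∀ i j, (i, j) ∈ E0 → ∀ ω, Ys0 i j ω = 0 ∨ Ys0 i j ω = 1)
    (H : MeasurableSpace Ω) (hH : H ≤ mΩ)
    -- consistency relations along causal edges
    (hcons1 : ∀ i j, (i, j) ∈ E0 →
      ∀ᵐ ω ∂μ, Y1 i ω * Y0 j ω = Ys1 i j ω * Y0 j ω)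
    (hcons0 : ∀ i j, (i, j) ∈ E0 →
      ∀ᵐ ω ∂μ, Y1 i ω * (1 - Y0 j ω) = Ys0 i j ω * (1 - Y0 j ω))
    -- unconfoundedness along causal edges
    (hindep : ∀ i j, (i, j) ∈ E0 →
      CondIndepFun H hH (fun ω => (Ys1 i j ω, Ys0 i j ω)) (Y0 j) μ)
    -- (a) vanishing covariance along non-causal proxy edges
    (hzero : ∀ i j, (i, j) ∈ EG \ E0 → condCov μ H (Y1 i) (Y0 j) =ᵐ[μ] 0)
    -- (b) nonnegative covariance along missed causal edges
    (hnonneg : ∀ i j, (i, j) ∈ E0 \ EG → ∀ᵐ ω ∂μ, 0 ≤ condCov μ H (Y1 i) (Y0 j) ω)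
    -- (c) the aggregated overlap condition `v² > 0` a.s.
    (hv : ∀ᵐ ω ∂μ,
      0 < (1 / (Fintype.card N : ℝ)) *
            ∑ j, (μ[Y0 j | H]) ω * (1 - (μ[Y0 j | H]) ω))
    (δ : ℝ) :
    ∀ᵐ ω ∂μ,
      (δ / ((Fintype.card N : ℝ) *
            ((1 / (Fintype.card N : ℝ)) *
              ∑ l, (μ[Y0 l | H]) ω * (1 - (μ[Y0 l | H]) ω))))
          * ∑ i, ((Finset.univ.filter (fun j =>
              (i, j) ∈ E0 \ EG ∧ δ < condCov μ H (Y1 i) (Y0 j) ω)).card : ℝ)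
        ≤ -- D
          (∑ j, ((μ[Y0 j | H]) ω * (1 - (μ[Y0 j | H]) ω)
              / ((Fintype.card N : ℝ) *
                  ((1 / (Fintype.card N : ℝ)) *
                    ∑ l, (μ[Y0 l | H]) ω * (1 - (μ[Y0 l | H]) ω))))
            * ∑ i ∈ Finset.univ.filter (fun i => (i, j) ∈ E0),
                (μ[fun ω' => Ys1 i j ω' - Ys0 i j ω' | H]) ω)
          -- − C_G
          - (1 / ((Fintype.card N : ℝ) *
              ((1 / (Fintype.card N : ℝ)) *
                ∑ l, (μ[Y0 l | H]) ω * (1 - (μ[Y0 l | H]) ω))))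
              * ∑ e ∈ EG, condCov μ H (Y1 e.1) (Y0 e.2) ω := by
  have hcd : ∀ᵐ ω ∂μ, ∀ e ∈ E0, condCov μ H (Y1 e.1) (Y0 e.2) ω
      = (μ[fun ω' => Ys1 e.1 e.2 ω' - Ys0 e.1 e.2 ω' | H]) ω
        * ((μ[Y0 e.2 | H]) ω * (1 - (μ[Y0 e.2 | H]) ω)) :=
    (Filter.eventually_all_finset E0).mpr fun ⟨i, j⟩ he =>
      condCov_ae_eq_condExp_sub_mul_of_condIndepFun (hY0m j) (hYs1m i j he) (hYs0m i j he)
        (hY0b j) (hYs1b i j he) (hYs0b i j he) (hcons1 i j he) (hcons0 i j he) (hindep i j he)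
  have hzero' : ∀ᵐ ω ∂μ, ∀ e ∈ EG \ E0, condCov μ H (Y1 e.1) (Y0 e.2) ω = 0 :=
    (Filter.eventually_all_finset _).mpr fun ⟨i, j⟩ he => hzero i j he
  have hnonneg' : ∀ᵐ ω ∂μ, ∀ e ∈ E0 \ EG, 0 ≤ condCov μ H (Y1 e.1) (Y0 e.2) ω :=
    (Filter.eventually_all_finset _).mpr fun ⟨i, j⟩ he => hnonneg i j he
  filter_upwards [hcd, hzero', hnonneg', hv] with ω hcdω hzeroω hnonnegω hvω
  exact div_mul_sum_card_le_sum_sub_sum E0 EG (fun e => condCov μ H (Y1 e.1) (Y0 e.2) ω)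
    (fun e => (μ[fun ω' => Ys1 e.1 e.2 ω' - Ys0 e.1 e.2 ω' | H]) ω)
    (fun j => (μ[Y0 j | H]) ω * (1 - (μ[Y0 j | H]) ω)) (mul_nonneg (Nat.cast_nonneg _) hvω.le) δ
    hcdω hzeroω hnonnegω

/-- key finite-sample lower bound from the proof of Lemma B.20 of the
supplemental note to He–Song, "Measuring Diffusion over a Large Network".
The gap `D − C_G` between the diffusion over the latent causal graph `E∘` and the
covariance measure over the proxy graph `E_G` is bounded below, almost surely, by
`δ/(n v²)` times the number of missed causal edges whose conditional covariance
exceeds `δ`. -/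
theorem stmt16 {Ω : Type*} [mΩ : MeasurableSpace Ω] [StandardBorelSpace Ω]
    (μ : Measure Ω) [IsProbabilityMeasure μ]
    {N : Type*} [Fintype N] [DecidableEq N]
    (E0 EG : Finset (N × N)) (hE0 : ∀ e ∈ E0, e.1 ≠ e.2) (hEG : ∀ e ∈ EG, e.1 ≠ e.2)
    (Y0 Y1 : N → Ω → ℝ) (Ys1 Ys0 : N → N → Ω → ℝ)
    (hY0m : ∀ j, Measurable (Y0 j)) (hY1m : ∀ i, Measurable (Y1 i))
    (hYs1m : ∀ i j, (i, j) ∈ E0 → Measurable (Ys1 i j))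
    (hYs0m : ∀ i j, (i, j) ∈ E0 → Measurable (Ys0 i j))
    (hY0b : ∀ j ω, Y0 j ω = 0 ∨ Y0 j ω = 1)
    (hY1b : ∀ i ω, Y1 i ω = 0 ∨ Y1 i ω = 1)
    (hYs1b : ∀ i j, (i, j) ∈ E0 → ∀ ω, Ys1 i j ω = 0 ∨ Ys1 i j ω = 1)
    (hYs0b : ∀ i j, (i, j) ∈ E0 → ∀ ω, Ys0 i j ω = 0 ∨ Ys0 i j ω = 1)
    (H : MeasurableSpace Ω) (hH : H ≤ mΩ)
    -- consistency relations along causal edges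
    (hcons1 : ∀ i j, (i, j) ∈ E0 →
      ∀ᵐ ω ∂μ, Y1 i ω * Y0 j ω = Ys1 i j ω * Y0 j ω)
    (hcons0 : ∀ i j, (i, j) ∈ E0 →
      ∀ᵐ ω ∂μ, Y1 i ω * (1 - Y0 j ω) = Ys0 i j ω * (1 - Y0 j ω))
    -- unconfoundedness along causal edges
    (hindep : ∀ i j, (i, j) ∈ E0 →
      CondIndepFun H hH (fun ω => (Ys1 i j ω, Ys0 i j ω)) (Y0 j) μ)
    -- (a) vanishing covariance along non-causal proxy edges
    (hzero : ∀ i j, (i, j) ∈ EG \ E0 → condCov μ H (Y1 i) (Y0 j) =ᵐ[μ] 0)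
    -- (b) nonnegative covariance along missed causal edges
    (hnonneg : ∀ i j, (i, j) ∈ E0 \ EG → ∀ᵐ ω ∂μ, 0 ≤ condCov μ H (Y1 i) (Y0 j) ω)
    -- (c) the aggregated overlap condition `v² > 0` a.s.
    (hv : ∀ᵐ ω ∂μ,
      0 < (1 / (Fintype.card N : ℝ)) *
            ∑ j, (μ[Y0 j | H]) ω * (1 - (μ[Y0 j | H]) ω))
    (δ : ℝ) (hδ : 0 < δ) :
    ∀ᵐ ω ∂μ,
      (δ / ((Fintype.card N : ℝ) *
            ((1 / (Fintype.card N : ℝ)) *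
              ∑ l, (μ[Y0 l | H]) ω * (1 - (μ[Y0 l | H]) ω))))
          * ∑ i, ((Finset.univ.filter (fun j =>
              (i, j) ∈ E0 \ EG ∧ δ < condCov μ H (Y1 i) (Y0 j) ω)).card : ℝ)
        ≤ -- D
          (∑ j, ((μ[Y0 j | H]) ω * (1 - (μ[Y0 j | H]) ω)
              / ((Fintype.card N : ℝ) *
                  ((1 / (Fintype.card N : ℝ)) *
                    ∑ l, (μ[Y0 l | H]) ω * (1 - (μ[Y0 l | H]) ω))))
            * ∑ i ∈ Finset.univ.filter (fun i => (i, j) ∈ E0),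
                (μ[fun ω' => Ys1 i j ω' - Ys0 i j ω' | H]) ω)
          -- − C_G
          - (1 / ((Fintype.card N : ℝ) *
              ((1 / (Fintype.card N : ℝ)) *
                ∑ l, (μ[Y0 l | H]) ω * (1 - (μ[Y0 l | H]) ω))))
              * ∑ e ∈ EG, condCov μ H (Y1 e.1) (Y0 e.2) ω :=
  stmt16_general (mΩ := mΩ) μ E0 EG Y0 Y1 Ys1 Ys0 hY0m hYs1m hYs0m hY0b hYs1b hYs0b H hH hcons1
    hcons0 hindep hzero hnonneg hv δ
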